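/- Let Sys be an SPA process tree, a an action, B a nonempty a-synchronised set of leaves of Sys, and S the a-closure of B. Let r be the root of the smallest subtree of Sys containing all leaves of S. Then there is no node of type ||_a strictly above r, i.e., every node on the path from r (exclusive) to the root of Sys (inclusive) is of type ||_{¬a}. -/
import Mathlib


/-!
An SPA system is modelled as a finite binary process tree: leaves are
sequential processes, each internal node is a parallel composition operator
labelled with a synchronisation set of actions.  Nodes (subtrees) of the tree
are identified with their positions, encoded as lists of Booleans (directions
from the root); a node `p` contains a node `q` iff `p` is a prefix of `q`.
-/

namespace SPA

/-- Binary process trees over a set of actions `Act`. -/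
inductive PTree (Act : Type) : Type
  | leaf : PTree Act
  | node : Set Act → PTree Act → PTree Act → PTree Act

variable {Act : Type}

/-- The subtree of a tree at a given position (if the position is valid). -/
def subtreeAt : PTree Act → List Bool → Option (PTree Act)
  | t, [] => some t
  | .leaf, _ :: _ => none
  | .node _ l r, b :: p => subtreeAt (if b then r else l) p

/-- `p` is a (valid position of a) node of `Sys`. -/
def IsNode (Sys : PTree Act) (p : List Bool) : Prop :=
  (subtreeAt Sys p).isSome

/-- `p` is a leaf of `Sys`, i.e. a sequential process. -/
def IsLeaf (Sys : PTree Act) (p : List Bool) : Prop :=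
  subtreeAt Sys p = some .leaf

/-- The node at position `p` is an internal node of type `||_a`
(its synchronisation set contains `a`). -/
def SyncAt (Sys : PTree Act) (p : List Bool) (a : Act) : Prop :=
  ∃ A l r, subtreeAt Sys p = some (.node A l r) ∧ a ∈ A

/-- The node at position `p` is an internal node of type `||_{¬a}`
(its synchronisation set does not contain `a`). -/
def NSyncAt (Sys : PTree Act) (p : List Bool) (a : Act) : Prop :=
  ∃ A l r, subtreeAt Sys p = some (.node A l r) ∧ a ∉ A

/-- Two nodes are disjoint iff neither subtree contains the other. -/
def DisjointNodes (p q : List Bool) : Prop :=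
  ¬ p <+: q ∧ ¬ q <+: p

/-- The longest common prefix of two positions: the join (lowest common
ancestor) of the two nodes, i.e. the root of the smallest subtree
containing both. -/
def lcp : List Bool → List Bool → List Bool
  | a :: as, b :: bs => if a = b then a :: lcp as bs else []
  | _, _ => []

/-- `q` lies strictly between `r` and `x` on the path from `r` down to `x`
(exclusive of both endpoints). -/
def StrictlyBetween (r x q : List Bool) : Prop :=
  r <+: q ∧ q <+: x ∧ q ≠ r ∧ q ≠ x

/-- The set of leaves of the subtree rooted at `p`. -/
def LeavesUnder (Sys : PTree Act) (p : List Bool) : Set (List Bool) :=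
  {q | p <+: q ∧ IsLeaf Sys q}


/-- A set `B` of leaves is `a`-synchronised: the join of every pair of distinct
leaves of `B` is of type `||_a`. -/
def ASynchronised (Sys : PTree Act) (a : Act) (B : Set (List Bool)) : Prop :=
  ∀ P ∈ B, ∀ Q ∈ B, P ≠ Q → SyncAt Sys (lcp P Q) a

/-- The `a`-closure of a set `B` of leaves: the least set containing `B` and
closed under the rule: if `P` is in the set and `Q` is a leaf distinct from `P`
whose join with `P` is of type `||_a`, then `Q` is in the set.
(This models the Involved Set of a transition.) -/
inductive AClosure (Sys : PTree Act) (a : Act) (B : Set (List Bool)) : List Bool → Prop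
  | base {P : List Bool} : P ∈ B → AClosure Sys a B P
  | step {P Q : List Bool} : AClosure Sys a B P → IsLeaf Sys Q → Q ≠ P →
      SyncAt Sys (lcp P Q) a → AClosure Sys a B Q

/-- `r` is the root of the smallest subtree containing all positions of `S`:
`r` is a common ancestor of all of `S`, and every common ancestor of all of `S`
contains the node `r`. -/
def IsJoinOf (S : Set (List Bool)) (r : List Bool) : Prop :=
  (∀ P ∈ S, r <+: P) ∧ ∀ q, (∀ P ∈ S, q <+: P) → q <+: r

lemma subtreeAt_append (p q : List Bool) :
    ∀ (t : PTree Act), subtreeAt t (p ++ q) = (subtreeAt t p).bind (fun s => subtreeAt s q) := by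
  induction p with
  | nil => intro t; simp [subtreeAt]
  | cons b p ih =>
    intro t
    cases t with
    | leaf => simp [subtreeAt]
    | node A l r => simp [subtreeAt, ih]

lemma exists_leaf_under (Sys : PTree Act) :
    ∀ (t : PTree Act) (p : List Bool), subtreeAt Sys p = some t →
      ∃ Q, p <+: Q ∧ IsLeaf Sys Q := by
  intro t
  induction t with
  | leaf => intro p hp; exact ⟨p, List.prefix_refl p, hp⟩
  | node A l r ihl ihr =>
    intro p hp
    have hl : subtreeAt Sys (p ++ [false]) = some l := by
      rw [subtreeAt_append, hp]; simp [subtreeAt]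
    obtain ⟨Q, hQ1, hQ2⟩ := ihl (p ++ [false]) hl
    exact ⟨Q, (List.prefix_append p [false]).trans hQ1, hQ2⟩

lemma lcp_append_of_ne {b c : Bool} (h : b ≠ c) :
    ∀ (q u v : List Bool), lcp (q ++ b :: u) (q ++ c :: v) = q := by
  intro q
  induction q with
  | nil => intro u v; simp [lcp, h]
  | cons x q ih => intro u v; simp [lcp, ih]

lemma aclosure_leaf {Sys : PTree Act} {a : Act} {B : Set (List Bool)}
    (hBleaf : ∀ P ∈ B, IsLeaf Sys P) {P : List Bool}
    (hP : AClosure Sys a B P) : IsLeaf Sys P := by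
  induction hP with
  | base h => exact hBleaf _ h
  | step _ hQ _ _ _ => exact hQ

/-- Let `B` be a nonempty `a`-synchronised set of leaves, `S` its
`a`-closure and `r` the root of the smallest subtree containing all leaves of
`S`.  Then there is no node of type `||_a` strictly above `r`: every node on
the path from `r` (exclusive) to the root of `Sys` (inclusive) is of type
`||_{¬a}`. -/
theorem closure_no_sync_above_root (Sys : PTree Act) (a : Act) (B : Set (List Bool))
    (hBne : B.Nonempty) (hBleaf : ∀ P ∈ B, IsLeaf Sys P)
    (hBsync : ASynchronised Sys a B)
    (r : List Bool) (hr : IsJoinOf {P | AClosure Sys a B P} r) :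
    ∀ q, q <+: r → q ≠ r → NSyncAt Sys q a := by
  intro q hq hne
  -- r = q ++ b :: rest
  obtain ⟨rest0, hrest0⟩ := hq
  cases rest0 with
  | nil => exact absurd (by simpa using hrest0) hne
  | cons b rest =>
  subst hrest0
  obtain ⟨P0, hP0B⟩ := hBne
  have hP0S : AClosure Sys a B P0 := AClosure.base hP0B
  have hrP0 : (q ++ b :: rest) <+: P0 := hr.1 _ hP0S
  have hP0leaf : IsLeaf Sys P0 := hBleaf _ hP0B
  -- q is an internal node
  obtain ⟨s0, hs0⟩ := hrP0
  have hsubP0 : subtreeAt Sys P0 = some PTree.leaf := hP0leaf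
  rw [← hs0] at hsubP0
  have hq1 : subtreeAt Sys (q ++ (b :: rest ++ s0)) = some PTree.leaf := by
    simpa using hsubP0
  rw [subtreeAt_append] at hq1
  cases hqt : subtreeAt Sys q with
  | none => rw [hqt] at hq1; simp at hq1
  | some t =>
    rw [hqt] at hq1
    cases t with
    | leaf => simp [subtreeAt] at hq1
    | node A l rr =>
      refine ⟨A, l, rr, hqt, ?_⟩
      intro haA
      -- take a leaf under the sibling child q ++ [!b]
      have hsib : subtreeAt Sys (q ++ [!b]) = some (if !b then rr else l) := by
        rw [subtreeAt_append, hqt]; simp [subtreeAt]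
      obtain ⟨Q, hQpre, hQleaf⟩ := exists_leaf_under Sys _ _ hsib
      obtain ⟨u, hu⟩ := hQpre
      -- P0 = q ++ b :: (rest ++ s0)
      have hP0eq : P0 = q ++ b :: (rest ++ s0) := by simp [← hs0]
      have hQeq : Q = q ++ (!b) :: u := by simp [← hu]
      have hbne : b ≠ !b := by cases b <;> simp
      have hlcp : lcp P0 Q = q := by
        rw [hP0eq, hQeq]; exact lcp_append_of_ne hbne _ _ _
      have hQne : Q ≠ P0 := by
        rw [hP0eq, hQeq]; intro h
        have := List.append_inj_right h rfl
        simp at this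
      have hQS : AClosure Sys a B Q :=
        AClosure.step hP0S hQleaf hQne (by rw [hlcp]; exact ⟨A, l, rr, hqt, haA⟩)
      have hrQ : (q ++ b :: rest) <+: Q := hr.1 _ hQS
      obtain ⟨v, hv⟩ := hrQ
      rw [hQeq] at hv
      simp [List.append_assoc] at hv


end SPA
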